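/- arXiv:2301.03038 — 2 statements merged into one kernel-verified Lean document; each statement's English description precedes it below -/
import Mathlib

section
/- Let φ_d(·; ξ, Ω) be the density of a d-variate Gaussian with mean ξ and positive definite covariance Ω, let F : ℝ → [0,1] be a cumulative distribution function satisfying F(-x) = 1 - F(x) for all x, and let α : ℝ^d → ℝ be an odd function (α(-u) = -α(u)). Then the function p(h) = 2 φ_d(h; ξ, Ω) F(α(h - ξ)) is a valid probability density on ℝ^d, i.e., p is nonnegative and integrates to 1. -/
open MeasureTheory Real
open scoped Matrix MatrixOrder

noncomputable def gaussDensity {d : ℕ} (ξ : EuclideanSpace ℝ (Fin d))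
    (Ω : Matrix (Fin d) (Fin d) ℝ) (h : EuclideanSpace ℝ (Fin d)) : ℝ :=
  (2 * Real.pi) ^ (-(d : ℝ) / 2) * Ω.det ^ (-(1 : ℝ) / 2) *
    Real.exp (-(1 / 2) * ∑ i, ∑ j, Ω⁻¹ i j * (h i - ξ i) * (h j - ξ j))

section aux

variable {d : ℕ}

private lemma det_nonneg_of_posSemidef {A : Matrix (Fin d) (Fin d) ℝ}
    (hA : A.PosSemidef) : 0 ≤ A.det := by
  rw [hA.1.det_eq_prod_eigenvalues]
  exact Finset.prod_nonneg fun i _ => by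
    simpa using hA.eigenvalues_nonneg i

private lemma quad_eq (A : Matrix (Fin d) (Fin d) ℝ) (hAT : Aᵀ = A)
    (v : EuclideanSpace ℝ (Fin d)) :
    ∑ i, ∑ j, (A * A) i j * v i * v j = ‖Matrix.toEuclideanLin A v‖ ^ 2 := by
  have hnorm : ‖Matrix.toEuclideanLin A v‖ ^ 2
      = (A *ᵥ fun j => v j) ⬝ᵥ (A *ᵥ fun j => v j) := by
    rw [EuclideanSpace.norm_eq, Real.sq_sqrt (by positivity)]
    simp only [Matrix.toEuclideanLin_apply, PiLp.toLp_apply,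
      Real.norm_eq_abs, sq_abs, dotProduct]
    refine Finset.sum_congr rfl fun i _ => ?_
    rw [pow_two]
  rw [hnorm, Matrix.dotProduct_mulVec, ← Matrix.mulVec_transpose, hAT,
    Matrix.mulVec_mulVec]
  simp only [dotProduct, Matrix.mulVec, Finset.sum_mul]
  exact Finset.sum_congr rfl fun i _ => Finset.sum_congr rfl fun j _ => by ring

end aux

theorem skew_symmetric_is_density {d : ℕ}
    (ξ : EuclideanSpace ℝ (Fin d)) (Ω : Matrix (Fin d) (Fin d) ℝ)
    (hΩ : Ω.PosDef)
    (F : ℝ → ℝ) (hFmeas : Measurable F) (hF0 : ∀ x, 0 ≤ F x) (hF1 : ∀ x, F x ≤ 1)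
    (hFmono : Monotone F) (hFsym : ∀ x, F (-x) = 1 - F x)
    (α : EuclideanSpace ℝ (Fin d) → ℝ) (hαmeas : Measurable α)
    (hαodd : ∀ u, α (-u) = -α u) :
    (∀ h, 0 ≤ 2 * gaussDensity ξ Ω h * F (α (h - ξ))) ∧
      ∫ h, 2 * gaussDensity ξ Ω h * F (α (h - ξ)) = 1 := by
  have hdet : 0 < Ω.det := hΩ.det_pos
  have hgpos : ∀ h, 0 < gaussDensity ξ Ω h := by
    intro h
    unfold gaussDensity
    have h1 : (0:ℝ) < (2 * Real.pi) ^ (-(d : ℝ) / 2) :=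
      Real.rpow_pos_of_pos (by positivity) _
    have h2 : (0:ℝ) < Ω.det ^ (-(1 : ℝ) / 2) := Real.rpow_pos_of_pos hdet _
    positivity
  constructor
  · intro h
    have := (hgpos h).le
    have := hF0 (α (h - ξ))
    positivity
  -- setup
  have hM : (Ω⁻¹).PosDef := Matrix.posDef_inv_iff.mpr hΩ
  set A := CFC.sqrt (Ω⁻¹) with hAdef
  have hA : A.PosSemidef := Matrix.nonneg_iff_posSemidef.mp (CFC.sqrt_nonneg _)
  have hAA : A * A = Ω⁻¹ := CFC.sqrt_mul_sqrt_self _ hM.posSemidef.nonneg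
  have hAT : Aᵀ = A := by
    rw [← Matrix.conjTranspose_eq_transpose_of_trivial]; exact hA.1
  have hdetA2 : A.det * A.det = (Ω.det)⁻¹ := by
    rw [← Matrix.det_mul, hAA, Matrix.det_nonsing_inv, Ring.inverse_eq_inv]
  have hdetAne : A.det ≠ 0 := by
    intro h0
    rw [h0, mul_zero] at hdetA2
    exact (inv_pos.mpr hdet).ne' hdetA2.symm
  have hdetApos : 0 < A.det :=
    lt_of_le_of_ne (det_nonneg_of_posSemidef hA) (Ne.symm hdetAne)
  have hdetA : A.det = Ω.det ^ (-(1:ℝ)/2) := by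
    have h1 : (Ω.det ^ (-(1:ℝ)/2)) * (Ω.det ^ (-(1:ℝ)/2)) = (Ω.det)⁻¹ := by
      rw [← Real.rpow_add hdet, ← Real.rpow_neg_one Ω.det]
      norm_num
    nlinarith [Real.rpow_pos_of_pos hdet (-(1:ℝ)/2)]
  set L : EuclideanSpace ℝ (Fin d) →ₗ[ℝ] EuclideanSpace ℝ (Fin d) :=
    Matrix.toEuclideanLin A with hLdef
  have hdetL : LinearMap.det L = A.det := by
    rw [hLdef, Matrix.toEuclideanLin_eq_toLin]
    exact LinearMap.det_toLin _ _
  have hL0 : LinearMap.det L ≠ 0 := by rw [hdetL]; exact hdetAne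
  set e : EuclideanSpace ℝ (Fin d) ≃ᵐ EuclideanSpace ℝ (Fin d) :=
    (LinearMap.equivOfDetNeZero L hL0).toContinuousLinearEquiv.toHomeomorph.toMeasurableEquiv
    with hedef
  have hecoe : ∀ x, e x = L x := fun x => rfl
  have hmap : Measure.map (⇑e) volume
      = ENNReal.ofReal |(LinearMap.det L)⁻¹| • volume := by
    have := Measure.map_linearMap_addHaar_eq_smul_addHaar
      (volume : Measure (EuclideanSpace ℝ (Fin d))) hL0
    rw [← this]
    congr 1
  -- the centered density
  set C : ℝ := (2 * Real.pi) ^ (-(d : ℝ) / 2) * Ω.det ^ (-(1 : ℝ) / 2) with hCdef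
  set φ : EuclideanSpace ℝ (Fin d) → ℝ :=
    fun v => C * Real.exp (-(1/2) * ‖L v‖ ^ 2) with hφdef
  have hquad : ∀ v : EuclideanSpace ℝ (Fin d),
      ∑ i, ∑ j, Ω⁻¹ i j * v i * v j = ‖L v‖ ^ 2 := by
    intro v
    rw [← hAA]
    exact quad_eq A hAT v
  have hgφ : ∀ h, gaussDensity ξ Ω h = φ (h - ξ) := by
    intro h
    unfold gaussDensity
    rw [hφdef]
    simp only
    rw [← hquad (h - ξ)]
    rfl
  have hφpos : ∀ v, 0 < φ v := fun v => by
    have h1 : (0:ℝ) < C := mul_pos (Real.rpow_pos_of_pos (by positivity) _)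
      (Real.rpow_pos_of_pos hdet _)
    positivity
  -- integrability of the base gaussian on euclidean space
  have base : Integrable (fun x : EuclideanSpace ℝ (Fin d) =>
      Real.exp (-(1/2) * ‖x‖ ^ 2)) := by
    have hc := (GaussianFourier.integrable_cexp_neg_mul_sq_norm_add
      (V := EuclideanSpace ℝ (Fin d)) (b := (1/2 : ℂ)) (by norm_num) 0 0).norm
    refine hc.congr ?_
    filter_upwards with v
    rw [Complex.norm_exp, zero_mul, add_zero,
      show (-(1/2 : ℂ) * (↑‖v‖ : ℂ) ^ 2) = ((-(1/2) * ‖v‖ ^ 2 : ℝ) : ℂ) by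
        push_cast; ring,
      Complex.ofReal_re]
  have hφint : Integrable φ := by
    have h1 : Integrable (fun x : EuclideanSpace ℝ (Fin d) =>
        Real.exp (-(1/2) * ‖x‖ ^ 2)) (Measure.map (⇑e) volume) := by
      rw [hmap]
      exact base.smul_measure ENNReal.ofReal_ne_top
    have h2 := (integrable_map_equiv e _).mp h1
    have h3 : ((fun x : EuclideanSpace ℝ (Fin d) =>
        Real.exp (-(1/2) * ‖x‖ ^ 2)) ∘ ⇑e)
        = fun v => Real.exp (-(1/2) * ‖L v‖ ^ 2) := by
      funext v; simp [Function.comp, hecoe]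
    rw [h3] at h2
    exact h2.const_mul C
  have hφcont : Continuous φ := by
    apply Continuous.mul continuous_const
    exact Real.continuous_exp.comp
      ((continuous_const.mul ((L.continuous_of_finiteDimensional.norm).pow 2)))
  have hφFint : Integrable (fun v => φ v * F (α v)) := by
    refine hφint.mono'
      (hφcont.aestronglyMeasurable.mul
        ((hFmeas.comp hαmeas).aestronglyMeasurable)) ?_
    filter_upwards with v
    rw [Real.norm_eq_abs, abs_mul, abs_of_pos (hφpos v),
      abs_of_nonneg (hF0 _)]
    calc φ v * F (α v) ≤ φ v * 1 :=
      mul_le_mul_of_nonneg_left (hF1 _) (hφpos v).le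
    _ = φ v := mul_one _
  -- symmetry step
  set I : ℝ := ∫ v, φ v * F (α v) with hIdef
  have hφneg : ∀ v, φ (-v) = φ v := by
    intro v
    rw [hφdef]
    simp only [map_neg, norm_neg]
  have hsymI : I = (∫ v, φ v) - I := by
    calc I = ∫ v, φ (-v) * F (α (-v)) := (integral_neg_eq_self _ _).symm
    _ = ∫ v, (φ v - φ v * F (α v)) := by
        refine integral_congr_ae (Filter.Eventually.of_forall fun v => ?_)
        simp only [hφneg, hαodd, hFsym]
        ring
    _ = (∫ v, φ v) - I := integral_sub hφint hφFint
  -- total mass of φ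
  have hφtotal : (∫ v, φ v) = 1 := by
    have h1 : (∫ v, φ v)
        = C * ∫ v, Real.exp (-(1/2) * ‖L v‖ ^ 2) := integral_const_mul _ _
    have h2 : (∫ v, Real.exp (-(1/2) * ‖L v‖ ^ 2))
        = ∫ x, Real.exp (-(1/2) * ‖x‖ ^ 2) ∂(Measure.map (⇑e) volume) := by
      rw [integral_map_equiv]
      exact integral_congr_ae (Filter.Eventually.of_forall fun x => by simp only [hecoe])
    have h3 : (∫ x, Real.exp (-(1/2) * ‖x‖ ^ 2) ∂(Measure.map (⇑e) volume))
        = |(LinearMap.det L)⁻¹| * ∫ x : EuclideanSpace ℝ (Fin d),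
            Real.exp (-(1/2) * ‖x‖ ^ 2) := by
      rw [hmap, integral_smul_measure, ENNReal.toReal_ofReal (abs_nonneg _),
        smul_eq_mul]
    have h4 : (∫ x : EuclideanSpace ℝ (Fin d), Real.exp (-(1/2) * ‖x‖ ^ 2))
        = (2 * Real.pi) ^ ((d : ℝ) / 2) := by
      have := GaussianFourier.integral_rexp_neg_mul_sq_norm
        (V := EuclideanSpace ℝ (Fin d)) (b := (1/2 : ℝ)) (by norm_num)
      simp only [neg_mul] at this ⊢
      rw [this, show Real.pi / (1/2 : ℝ) = 2 * Real.pi by ring,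
        finrank_euclideanSpace_fin]
    have h5 : |(LinearMap.det L)⁻¹| = Ω.det ^ ((1:ℝ)/2) := by
      rw [hdetL, abs_of_pos (inv_pos.mpr hdetApos), hdetA,
        ← Real.rpow_neg hdet.le]
      norm_num
    rw [h1, h2, h3, h4, h5, hCdef]
    rw [show (2 * Real.pi) ^ (-(d : ℝ) / 2) * Ω.det ^ (-(1 : ℝ) / 2) *
        (Ω.det ^ ((1:ℝ)/2) * (2 * Real.pi) ^ ((d : ℝ) / 2))
      = ((2 * Real.pi) ^ (-(d : ℝ) / 2) * (2 * Real.pi) ^ ((d : ℝ) / 2)) *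
        (Ω.det ^ (-(1 : ℝ) / 2) * Ω.det ^ ((1:ℝ)/2)) from by ring]
    rw [← Real.rpow_add (by positivity), ← Real.rpow_add hdet]
    rw [show (-(d:ℝ)/2 + (d:ℝ)/2 : ℝ) = 0 by ring,
      show (-(1:ℝ)/2 + 1/2 : ℝ) = 0 by ring, Real.rpow_zero, Real.rpow_zero]
    norm_num
  -- translation and conclusion
  have htrans : (∫ h, 2 * gaussDensity ξ Ω h * F (α (h - ξ)))
      = ∫ v, 2 * (φ v * F (α v)) := by
    have : (fun h => 2 * gaussDensity ξ Ω h * F (α (h - ξ)))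
        = fun h => (fun v => 2 * (φ v * F (α v))) (h - ξ) := by
      funext h
      simp only [hgφ h]
      ring
    rw [this, integral_sub_right_eq_self (fun v => 2 * (φ v * F (α v))) ξ]
  rw [htrans, integral_const_mul]
  have : I = 1 / 2 := by
    have := hφtotal
    rw [this] at hsymI
    linarith
  rw [← hIdef, this]
  norm_num
end

section
/- Let Z₀ be a random vector in ℝ^d with density φ_d(·; 0, Ω), and Z₁ an independent uniform random variable on [0,1]. Let F be a univariate cdf with F(-x)=1-F(x) and α : ℝ^d → ℝ odd. Then the random vector X = ξ + sgn(F(α(Z₀)) - Z₁) · Z₀ has density p(h) = 2 φ_d(h; ξ, Ω) F(α(h - ξ)). -/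
open MeasureTheory Real ProbabilityTheory

theorem skew_symmetric_sampling {d : ℕ}
    (ξ : EuclideanSpace ℝ (Fin d)) (Ω : Matrix (Fin d) (Fin d) ℝ)
    (hΩ : Ω.PosDef)
    (F : ℝ → ℝ) (hFmeas : Measurable F) (hF0 : ∀ x, 0 ≤ F x) (hF1 : ∀ x, F x ≤ 1)
    (hFmono : Monotone F) (hFsym : ∀ x, F (-x) = 1 - F x)
    (α : EuclideanSpace ℝ (Fin d) → ℝ) (hαmeas : Measurable α)
    (hαodd : ∀ u, α (-u) = -α u)
    {Ω' : Type*} [MeasurableSpace Ω'] (P : Measure Ω') [IsProbabilityMeasure P]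
    (Z0 : Ω' → EuclideanSpace ℝ (Fin d)) (Z1 : Ω' → ℝ)
    (hZ0m : Measurable Z0) (hZ1m : Measurable Z1)
    (hZ0 : Measure.map Z0 P =
      volume.withDensity fun h => ENNReal.ofReal (gaussDensity 0 Ω h))
    (hZ1 : Measure.map Z1 P = volume.restrict (Set.Icc (0 : ℝ) 1))
    (hindep : IndepFun Z0 Z1 P) :
    Measure.map (fun ω => ξ +
        (if 0 ≤ F (α (Z0 ω)) - Z1 ω then (1 : ℝ) else -1) • Z0 ω) P =
      volume.withDensity fun h =>
        ENNReal.ofReal (2 * gaussDensity ξ Ω h * F (α (h - ξ))) := by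
  classical
  have hdet : (0 : ℝ) < Ω.det := hΩ.det_pos
  set g : EuclideanSpace ℝ (Fin d) → ℝ := gaussDensity 0 Ω with hgdef
  have hg0 : ∀ z, 0 ≤ g z := by
    intro z
    have h1 : (0:ℝ) ≤ (2 * Real.pi) ^ (-(d : ℝ) / 2) :=
      Real.rpow_nonneg (by positivity) _
    have h2 : (0:ℝ) ≤ Ω.det ^ (-(1:ℝ) / 2) := Real.rpow_nonneg hdet.le _
    exact mul_nonneg (mul_nonneg h1 h2) (Real.exp_nonneg _)
  have hgmeas : Measurable g := by
    simp only [hgdef, gaussDensity]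
    apply Measurable.const_mul
    apply Real.measurable_exp.comp
    apply Measurable.const_mul
    apply Finset.measurable_sum
    intro i _
    apply Finset.measurable_sum
    intro j _
    fun_prop
  have hgneg : ∀ z : EuclideanSpace ℝ (Fin d), g (-z) = g z := by
    intro z
    have key : (∑ i, ∑ j, Ω⁻¹ i j * ((-z) i - (0 : EuclideanSpace ℝ (Fin d)) i)
          * ((-z) j - (0 : EuclideanSpace ℝ (Fin d)) j))
        = ∑ i, ∑ j, Ω⁻¹ i j * (z i - (0 : EuclideanSpace ℝ (Fin d)) i)
          * (z j - (0 : EuclideanSpace ℝ (Fin d)) j) :=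
      Finset.sum_congr rfl fun i _ => Finset.sum_congr rfl fun j _ => by
        simp only [PiLp.neg_apply, PiLp.zero_apply]; ring
    simp only [hgdef, gaussDensity, key]
  have hgshift : ∀ z : EuclideanSpace ℝ (Fin d), gaussDensity ξ Ω (ξ + z) = g z := by
    intro z
    have key : (∑ i, ∑ j, Ω⁻¹ i j * ((ξ + z) i - ξ i) * ((ξ + z) j - ξ j))
        = ∑ i, ∑ j, Ω⁻¹ i j * (z i - (0 : EuclideanSpace ℝ (Fin d)) i)
          * (z j - (0 : EuclideanSpace ℝ (Fin d)) j) :=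
      Finset.sum_congr rfl fun i _ => Finset.sum_congr rfl fun j _ => by
        simp only [PiLp.add_apply, PiLp.zero_apply]; ring
    simp only [hgdef, gaussDensity, key]
  -- rewrite the map as a composition
  set ψ : EuclideanSpace ℝ (Fin d) × ℝ → EuclideanSpace ℝ (Fin d) :=
    fun p => if p.2 ≤ F (α p.1) then ξ + p.1 else ξ - p.1 with hψdef
  have hS : MeasurableSet {p : EuclideanSpace ℝ (Fin d) × ℝ | p.2 ≤ F (α p.1)} :=
    measurableSet_le measurable_snd ((hFmeas.comp hαmeas).comp measurable_fst)
  have hψ : Measurable ψ :=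
    Measurable.ite hS (measurable_const.add measurable_fst)
      (measurable_const.sub measurable_fst)
  have hXeq : (fun ω => ξ + (if 0 ≤ F (α (Z0 ω)) - Z1 ω then (1 : ℝ) else -1) • Z0 ω)
      = ψ ∘ (fun ω => (Z0 ω, Z1 ω)) := by
    funext ω
    simp only [Function.comp_apply, hψdef]
    by_cases h : Z1 ω ≤ F (α (Z0 ω))
    · rw [if_pos (by linarith), if_pos h, one_smul]
    · rw [if_neg (fun hc => h (by linarith)), if_neg h, neg_one_smul, ← sub_eq_add_neg]
  rw [hXeq, ← Measure.map_map hψ (hZ0m.prodMk hZ1m),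
    (indepFun_iff_map_prod_eq_prod_map_map hZ0m.aemeasurable hZ1m.aemeasurable).mp hindep,
    hZ0, hZ1]
  set μ : Measure (EuclideanSpace ℝ (Fin d)) :=
    volume.withDensity fun h => ENNReal.ofReal (g h) with hμdef
  set ν : Measure ℝ := volume.restrict (Set.Icc (0 : ℝ) 1) with hνdef
  ext A hA
  rw [Measure.map_apply hψ hA, Measure.prod_apply (hψ hA), withDensity_apply _ hA]
  -- compute the slice measure
  have hslice : ∀ z : EuclideanSpace ℝ (Fin d),
      ν (Prod.mk z ⁻¹' (ψ ⁻¹' A)) =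
        A.indicator (fun _ => (1 : ENNReal)) (ξ + z) * ENNReal.ofReal (F (α z))
          + A.indicator (fun _ => (1 : ENNReal)) (ξ - z) * ENNReal.ofReal (1 - F (α z)) := by
    intro z
    have hpre : Prod.mk z ⁻¹' (ψ ⁻¹' A)
        = {u : ℝ | (if u ≤ F (α z) then ξ + z else ξ - z) ∈ A} := rfl
    by_cases h1 : ξ + z ∈ A <;> by_cases h2 : ξ - z ∈ A
    · have : Prod.mk z ⁻¹' (ψ ⁻¹' A) = Set.univ := by
        rw [hpre]; ext u; simp only [Set.mem_setOf_eq, Set.mem_univ, iff_true]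
        split <;> assumption
      rw [this, hνdef]
      simp only [Set.indicator_of_mem h1, Set.indicator_of_mem h2, one_mul]
      rw [Measure.restrict_apply MeasurableSet.univ, Set.univ_inter, Real.volume_Icc,
        ← ENNReal.ofReal_add (hF0 _) (by linarith [hF1 (α z)])]
      norm_num
    · have : Prod.mk z ⁻¹' (ψ ⁻¹' A) = Set.Iic (F (α z)) := by
        rw [hpre]; ext u; simp only [Set.mem_setOf_eq, Set.mem_Iic]
        constructor
        · intro h; by_contra hc
          rw [if_neg (fun hle => hc hle)] at h; exact h2 h
        · intro h; rw [if_pos h]; exact h1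
      rw [this, hνdef]
      simp only [Set.indicator_of_mem h1, Set.indicator_of_notMem h2, one_mul, zero_mul,
        add_zero]
      rw [Measure.restrict_apply measurableSet_Iic]
      have : Set.Iic (F (α z)) ∩ Set.Icc (0:ℝ) 1 = Set.Icc 0 (F (α z)) := by
        ext u
        simp only [Set.mem_inter_iff, Set.mem_Iic, Set.mem_Icc]
        constructor
        · rintro ⟨h, h0, _⟩; exact ⟨h0, h⟩
        · rintro ⟨h0, h⟩; exact ⟨h, h0, h.trans (hF1 _)⟩
      rw [this, Real.volume_Icc, sub_zero]
    · have : Prod.mk z ⁻¹' (ψ ⁻¹' A) = Set.Ioi (F (α z)) := by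
        rw [hpre]; ext u; simp only [Set.mem_setOf_eq, Set.mem_Ioi]
        constructor
        · intro h; by_contra hc
          rw [if_pos (not_lt.mp hc)] at h; exact h1 h
        · intro h; rw [if_neg (not_le.mpr h)]; exact h2
      rw [this, hνdef]
      simp only [Set.indicator_of_notMem h1, Set.indicator_of_mem h2, one_mul, zero_mul,
        zero_add]
      rw [Measure.restrict_apply measurableSet_Ioi]
      have : Set.Ioi (F (α z)) ∩ Set.Icc (0:ℝ) 1 = Set.Ioc (F (α z)) 1 := by
        ext u
        simp only [Set.mem_inter_iff, Set.mem_Ioi, Set.mem_Icc, Set.mem_Ioc]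
        constructor
        · rintro ⟨h, _, h1'⟩; exact ⟨h, h1'⟩
        · rintro ⟨h, h1'⟩; exact ⟨h, (hF0 _).trans h.le, h1'⟩
      rw [this, Real.volume_Ioc]
    · have : Prod.mk z ⁻¹' (ψ ⁻¹' A) = ∅ := by
        rw [hpre]; ext u; simp only [Set.mem_setOf_eq, Set.mem_empty_iff_false, iff_false]
        intro h; split at h
        · exact h1 h
        · exact h2 h
      rw [this]
      simp [Set.indicator_of_notMem h1, Set.indicator_of_notMem h2]
  rw [lintegral_congr hslice]
  -- measurable pieces
  have hind1 : Measurable fun z : EuclideanSpace ℝ (Fin d) =>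
      A.indicator (fun _ => (1 : ENNReal)) (ξ + z) :=
    (measurable_const.indicator hA).comp (measurable_const.add measurable_id)
  have hind2 : Measurable fun z : EuclideanSpace ℝ (Fin d) =>
      A.indicator (fun _ => (1 : ENNReal)) (ξ - z) :=
    (measurable_const.indicator hA).comp (measurable_const.sub measurable_id)
  have hFα : Measurable fun z : EuclideanSpace ℝ (Fin d) => F (α z) := hFmeas.comp hαmeas
  have hf1m : Measurable fun z : EuclideanSpace ℝ (Fin d) =>
      A.indicator (fun _ => (1 : ENNReal)) (ξ + z) * ENNReal.ofReal (F (α z)) :=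
    hind1.mul (ENNReal.measurable_ofReal.comp hFα)
  have hf2m : Measurable fun z : EuclideanSpace ℝ (Fin d) =>
      A.indicator (fun _ => (1 : ENNReal)) (ξ - z) * ENNReal.ofReal (1 - F (α z)) :=
    hind2.mul (ENNReal.measurable_ofReal.comp (measurable_const.sub hFα))
  rw [hμdef, lintegral_withDensity_eq_lintegral_mul volume
      (f := fun h => ENNReal.ofReal (g h)) hgmeas.ennreal_ofReal
      (show Measurable fun z => _ + _ from hf1m.add hf2m)]
  simp only [Pi.mul_apply]
  have hdistrib : ∀ z : EuclideanSpace ℝ (Fin d),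
      ENNReal.ofReal (g z) *
        (A.indicator (fun _ => (1 : ENNReal)) (ξ + z) * ENNReal.ofReal (F (α z))
          + A.indicator (fun _ => (1 : ENNReal)) (ξ - z) * ENNReal.ofReal (1 - F (α z)))
      = ENNReal.ofReal (g z) * (A.indicator (fun _ => (1 : ENNReal)) (ξ + z)
            * ENNReal.ofReal (F (α z)))
        + ENNReal.ofReal (g z) * (A.indicator (fun _ => (1 : ENNReal)) (ξ - z)
            * ENNReal.ofReal (1 - F (α z))) := fun z => mul_add _ _ _
  rw [lintegral_congr hdistrib,
    lintegral_add_left (show Measurable fun z => _ * _ from (hgmeas.ennreal_ofReal).mul hf1m)]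
  -- change of variables z ↦ -z in the second integral
  have hneg : (∫⁻ z, ENNReal.ofReal (g z) * (A.indicator (fun _ => (1 : ENNReal)) (ξ - z)
        * ENNReal.ofReal (1 - F (α z))))
      = ∫⁻ z, ENNReal.ofReal (g z) * (A.indicator (fun _ => (1 : ENNReal)) (ξ + z)
        * ENNReal.ofReal (F (α z))) := by
    have hmp : MeasurePreserving (fun z : EuclideanSpace ℝ (Fin d) => -z) volume volume :=
      Measure.measurePreserving_neg _
    calc (∫⁻ z, ENNReal.ofReal (g z) * (A.indicator (fun _ => (1 : ENNReal)) (ξ - z)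
          * ENNReal.ofReal (1 - F (α z))))
        = ∫⁻ z, ENNReal.ofReal (g (-z)) * (A.indicator (fun _ => (1 : ENNReal)) (ξ - (-z))
            * ENNReal.ofReal (1 - F (α (-z)))) := by
          exact (hmp.lintegral_comp
            (((hgmeas.ennreal_ofReal).mul hf2m))).symm
      _ = ∫⁻ z, ENNReal.ofReal (g z) * (A.indicator (fun _ => (1 : ENNReal)) (ξ + z)
            * ENNReal.ofReal (F (α z))) := by
          apply lintegral_congr
          intro z
          rw [hgneg, hαodd, hFsym, sub_neg_eq_add]
          ring_nf
  rw [hneg, ← two_mul]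
  -- compute the right-hand side
  rw [← lintegral_indicator hA]
  have hRHS : (∫⁻ h, A.indicator
        (fun h => ENNReal.ofReal (2 * gaussDensity ξ Ω h * F (α (h - ξ)))) h)
      = ∫⁻ z, A.indicator
        (fun h => ENNReal.ofReal (2 * gaussDensity ξ Ω h * F (α (h - ξ)))) (ξ + z) := by
    exact (lintegral_add_left_eq_self _ ξ).symm
  rw [hRHS, ← lintegral_const_mul 2
    (show Measurable fun z => _ * _ from hgmeas.ennreal_ofReal.mul hf1m)]
  apply lintegral_congr
  intro z
  by_cases h1 : ξ + z ∈ A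
  · rw [Set.indicator_of_mem h1, Set.indicator_of_mem h1, one_mul, hgshift,
      add_sub_cancel_left]
    rw [show (2:ℝ) * g z * F (α z) = g z * (2 * F (α z)) by ring,
      ENNReal.ofReal_mul (hg0 z), ENNReal.ofReal_mul (by norm_num : (0:ℝ) ≤ 2)]
    rw [show (ENNReal.ofReal 2 : ENNReal) = 2 by norm_num]
    ring
  · rw [Set.indicator_of_notMem h1, Set.indicator_of_notMem h1, zero_mul, mul_zero,
      mul_zero]
end
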